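/- For all i, j ∈ {0,…,n−1}, the closed interval I_{i,j} = [i, 2n−1−j] satisfies w(I_{i,j}) = A_i + B_j. -/

import Mathlib

/-- The total weight of the constructed points (from sequences `A`, `B` of length `n`)
whose coordinate lies in the closed interval `[a, b]`: for each `i ∈ {0,…,n−1}` there is
a point at `i` with weight `A i`, a guard at `i − 0.5` with weight `−A i`, a point at
`2n−1−i` with weight `B i`, and a guard at `2n−1−i+0.5` with weight `−B i`. -/
noncomputable def intervalWeight (n : ℕ) (A B : Fin n → ℝ) (a b : ℝ) : ℝ :=
  ∑ i : Fin n,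
    ((if a ≤ (i : ℝ) ∧ (i : ℝ) ≤ b then A i else 0)
      + (if a ≤ (i : ℝ) - 0.5 ∧ (i : ℝ) - 0.5 ≤ b then -(A i) else 0)
      + (if a ≤ 2 * n - 1 - (i : ℝ) ∧ 2 * n - 1 - (i : ℝ) ≤ b then B i else 0)
      + (if a ≤ 2 * n - 1 - (i : ℝ) + 0.5 ∧ 2 * n - 1 - (i : ℝ) + 0.5 ≤ b then -(B i) else 0))

/-! For each index `k`, the point `k` and its guard `k − 1/2` both lie in `[i, 2n−1−j]` when
`i < k`, neither does when `k < i`, and only the point does when `k = i`; so the `A`-weights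
cancel except for `A i`. Symmetrically, the `B`-weights cancel except for `B j`. -/

theorem ite_le_add_ite_lt_neg {α M : Type*} [LinearOrder α] [AddGroup M] (a b : α) (x : M) :
    ((if a ≤ b then x else 0) + if a < b then -x else 0) = if b = a then x else 0 := by
  rcases lt_trichotomy a b with h | rfl | h
  · simp [h.le, h, h.ne']
  · simp
  · simp [h.not_ge, h.not_gt, h.ne]

theorem natCast_add_half_le_natCast_iff {m k : ℕ} : (m : ℝ) + 0.5 ≤ k ↔ m < k := by
  constructor
  · intro h
    exact_mod_cast (by linarith : (m : ℝ) < k)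
  · intro h
    have : (m : ℝ) + 1 ≤ k := by exact_mod_cast h
    linarith

section
variable {n : ℕ} (i j k : Fin n)

theorem fin_add_le_two_mul_sub_two : (i : ℝ) + k ≤ 2 * n - 2 := by
  have hi : (i : ℝ) + 1 ≤ n := by exact_mod_cast i.isLt
  have hk : (k : ℝ) + 1 ≤ n := by exact_mod_cast k.isLt
  linarith

theorem point_mem_iff : ((i : ℝ) ≤ k ∧ (k : ℝ) ≤ 2 * n - 1 - j) ↔ i ≤ k := by
  rw [and_iff_left (by linarith [fin_add_le_two_mul_sub_two k j])]
  exact Nat.cast_le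

theorem guard_mem_iff : ((i : ℝ) ≤ k - 0.5 ∧ (k : ℝ) - 0.5 ≤ 2 * n - 1 - j) ↔ i < k := by
  rw [and_iff_left (by linarith [fin_add_le_two_mul_sub_two k j]), le_sub_iff_add_le]
  exact natCast_add_half_le_natCast_iff

theorem mirror_point_mem_iff :
    ((i : ℝ) ≤ 2 * n - 1 - k ∧ 2 * n - 1 - (k : ℝ) ≤ 2 * n - 1 - j) ↔ j ≤ k := by
  rw [and_iff_right (by linarith [fin_add_le_two_mul_sub_two i k]), sub_le_sub_iff_left]
  exact Nat.cast_le

theorem mirror_guard_mem_iff :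
    ((i : ℝ) ≤ 2 * n - 1 - k + 0.5 ∧ 2 * n - 1 - (k : ℝ) + 0.5 ≤ 2 * n - 1 - j) ↔ j < k := by
  rw [and_iff_right (by linarith [fin_add_le_two_mul_sub_two i k])]
  refine Iff.trans ?_ natCast_add_half_le_natCast_iff
  constructor <;> intro h <;> linarith

end

theorem intervalWeight_eq_sum_ite {n : ℕ} (A B : Fin n → ℝ) (i j : Fin n) :
    intervalWeight n A B i (2 * n - 1 - j) =
      ∑ k, ((if k = i then A k else 0) + if k = j then B k else 0) := by
  refine Finset.sum_congr rfl fun k _ => ?_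
  simp only [point_mem_iff, guard_mem_iff, mirror_point_mem_iff, mirror_guard_mem_iff]
  rw [add_assoc, ite_le_add_ite_lt_neg, ite_le_add_ite_lt_neg]

theorem interval_weight_eq_general (n : ℕ) (A B : Fin n → ℝ) (i j : Fin n) :
    intervalWeight n A B (i : ℝ) (2 * n - 1 - (j : ℝ)) = A i + B j := by
  rw [intervalWeight_eq_sum_ite, Finset.sum_add_distrib]
  simp only [Finset.sum_ite_eq', Finset.mem_univ, if_true]

/-- for all `i, j ∈ {0,…,n−1}`, the closed interval
`I_{i,j} = [i, 2n−1−j]` covers total weight exactly `A i + B j`. -/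
theorem interval_weight_eq (n : ℕ) (hn : 1 ≤ n) (A B : Fin n → ℝ) (i j : Fin n) :
    intervalWeight n A B (i : ℝ) (2 * n - 1 - (j : ℝ)) = A i + B j :=
  interval_weight_eq_general n A B i j
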